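/- arXiv:2507.15485 — 6 statements merged into one kernel-verified Lean document; each statement's English description precedes it below -/
import Mathlib

section
/- Let φ: ℝ → ℝ be continuously differentiable on a closed interval I with endpoints αₗ and αᵤ, μ ∈ (0,1), and ψ(α) = φ(α) − (φ(0) + μ·φ'(0)·α). If ψ(αₗ) ≤ ψ(αᵤ), ψ(αₗ) ≤ 0, and ψ'(αₗ)·(αᵤ − αₗ) < 0, then there exists α⋆ ∈ I with ψ(α⋆) ≤ ψ(αₗ) and ψ'(α⋆) = 0. -/
/-!
Say `αₗ < αᵤ`, so that `ψ' αₗ < 0`; the other case is the mirror image under `α ↦ -α`.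
Then `ψ` drops below `ψ αₗ` just to the right of `αₗ`, so the minimum of `ψ` over `[αₗ, αᵤ]`
is strictly below `ψ αₗ ≤ ψ αᵤ`. It is therefore attained in the open interval, where it is a
local minimum and `ψ'` vanishes.
-/

open Filter Set Topology

lemma exists_mem_Ioo_lt_of_deriv_neg {f : ℝ → ℝ} {a b : ℝ} (hab : a < b) (hf : deriv f a < 0) :
    ∃ x ∈ Ioo a b, f x < f a := by
  have hslope : Tendsto (slope f a) (𝓝[>] a) (𝓝 (deriv f a)) :=
    (hasDerivAt_iff_tendsto_slope.mp
      (differentiableAt_of_deriv_ne_zero hf.ne).hasDerivAt).mono_left (nhdsGT_le_nhdsNE a)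
  obtain ⟨x, hneg, hx⟩ :=
    ((hslope.eventually (eventually_lt_nhds hf)).and (Ioo_mem_nhdsGT hab)).exists
  exact ⟨x, hx, (slope_neg_iff_of_le hx.1.le).mp hneg⟩

lemma exists_mem_Ioo_lt_deriv_eq_zero_of_deriv_neg {f : ℝ → ℝ} {a b : ℝ} (hab : a < b)
    (hfc : ContinuousOn f (Icc a b)) (hfab : f a ≤ f b) (hf : deriv f a < 0) :
    ∃ c ∈ Ioo a b, f c < f a ∧ deriv f c = 0 := by
  obtain ⟨x, hx, hxa⟩ := exists_mem_Ioo_lt_of_deriv_neg hab hf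
  have hx_lt_ends : ∀ y ∈ Icc a b \ Ioo a b, f x < f y := by
    rw [Icc_sdiff_Ioo_same hab.le]
    rintro y (rfl | rfl)
    exacts [hxa, hxa.trans_le hfab]
  obtain ⟨c, hc, hmin⟩ :=
    isCompact_Icc.exists_isMinOn_mem_subset hfc (Ioo_subset_Icc_self hx) hx_lt_ends
  have hlocal : IsLocalMin f c := hmin.isLocalMin (Icc_mem_nhds hc.1 hc.2)
  exact ⟨c, hc, (hmin (Ioo_subset_Icc_self hx)).trans_lt hxa, hlocal.deriv_eq_zero⟩

lemma exists_mem_Ioo_lt_deriv_eq_zero_of_deriv_pos {f : ℝ → ℝ} {a b : ℝ} (hba : b < a)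
    (hfc : ContinuousOn f (Icc b a)) (hfab : f a ≤ f b) (hf : 0 < deriv f a) :
    ∃ c ∈ Ioo b a, f c < f a ∧ deriv f c = 0 := by
  have hgc : ContinuousOn (fun x ↦ f (-x)) (Icc (-a) (-b)) :=
    hfc.comp continuous_neg.continuousOn fun x hx ↦ ⟨by linarith [hx.2], by linarith [hx.1]⟩
  have hg : deriv (fun x ↦ f (-x)) (-a) < 0 := by
    simpa only [deriv_comp_neg, neg_neg, neg_lt_zero] using hf
  obtain ⟨c, hc, hca, hc0⟩ := exists_mem_Ioo_lt_deriv_eq_zero_of_deriv_neg (neg_lt_neg hba) hgc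
    (by simpa only [neg_neg] using hfab) hg
  refine ⟨-c, ⟨by linarith [hc.2], by linarith [hc.1]⟩, by simpa only [neg_neg] using hca, ?_⟩
  simpa only [deriv_comp_neg, neg_eq_zero] using hc0

theorem exists_mem_uIcc_lt_deriv_eq_zero {f : ℝ → ℝ} {a b : ℝ}
    (hfc : ContinuousOn f (uIcc a b)) (hfab : f a ≤ f b) (hf : deriv f a * (b - a) < 0) :
    ∃ c ∈ uIcc a b, f c < f a ∧ deriv f c = 0 := by
  rcases lt_trichotomy a b with hab | rfl | hba
  · rw [uIcc_of_lt hab] at hfc ⊢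
    obtain ⟨c, hc, h⟩ := exists_mem_Ioo_lt_deriv_eq_zero_of_deriv_neg hab hfc hfab
      (neg_of_mul_neg_left hf (sub_pos.mpr hab).le)
    exact ⟨c, Ioo_subset_Icc_self hc, h⟩
  · simp at hf
  · rw [uIcc_of_gt hba] at hfc ⊢
    obtain ⟨c, hc, h⟩ := exists_mem_Ioo_lt_deriv_eq_zero_of_deriv_pos hba hfc hfab
      (pos_of_mul_neg_left hf (sub_neg.mpr hba).le)
    exact ⟨c, Ioo_subset_Icc_self hc, h⟩

theorem stmt_2_general (φ : ℝ → ℝ) (hφ : ContDiff ℝ 1 φ)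
    (μ : ℝ)
    (ψ : ℝ → ℝ) (hψ : ψ = fun α => φ α - (φ 0 + μ * deriv φ 0 * α))
    (αl αu : ℝ)
    (h1 : ψ αl ≤ ψ αu) (h3 : deriv ψ αl * (αu - αl) < 0) :
    ∃ αs ∈ Set.uIcc αl αu, ψ αs ≤ ψ αl ∧ deriv ψ αs = 0 := by
  have hψc : Continuous ψ := hψ ▸ by fun_prop
  obtain ⟨αs, hαs, hlt, hderiv⟩ := exists_mem_uIcc_lt_deriv_eq_zero hψc.continuousOn h1 h3
  exact ⟨αs, hαs, hlt.le, hderiv⟩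

theorem stmt_2 (φ : ℝ → ℝ) (hφ : ContDiff ℝ 1 φ)
    (μ : ℝ) (hμ0 : 0 < μ) (hμ1 : μ < 1)
    (ψ : ℝ → ℝ) (hψ : ψ = fun α => φ α - (φ 0 + μ * deriv φ 0 * α))
    (αl αu : ℝ)
    (h1 : ψ αl ≤ ψ αu) (h2 : ψ αl ≤ 0) (h3 : deriv ψ αl * (αu - αl) < 0) :
    ∃ αs ∈ Set.uIcc αl αu, ψ αs ≤ ψ αl ∧ deriv ψ αs = 0 :=
  stmt_2_general φ hφ μ ψ hψ αl αu h1 h3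
end

section
/- Let φ: ℝ → ℝ be continuously differentiable on the closed interval [αₗ, αᵤ] with αₗ < αᵤ, μ ∈ (0,1), and ψ(α) = φ(α) − (φ(0) + μ·φ'(0)·α). If ψ(αₗ) ≤ 0 and ψ'(αₗ) < 0, and either ψ(αᵤ) ≥ ψ(αₗ) or ψ'(αᵤ) ≥ 0, then there exists α⋆ ∈ [αₗ, αᵤ] with ψ(α⋆) ≤ ψ(αₗ) and ψ'(α⋆) = 0. -/
/-!
Take a minimiser `c` of `ψ` on `[αₗ, αᵤ]`. Since `ψ'(αₗ) < 0`, the point `αₗ` is not a minimiser,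
so `ψ c < ψ αₗ`. If `c` is interior then `ψ' c = 0`; if `c = αᵤ` then `ψ αᵤ < ψ αₗ`, so by hypothesis
`ψ'(αᵤ) ≥ 0`, while minimality at the right endpoint gives `ψ'(αᵤ) ≤ 0`.
-/

open Filter Set Topology

section

variable {f : ℝ → ℝ} {a b : ℝ}

theorem deriv_nonneg_of_isMinOn_Icc_left (hab : a < b) (hmin : IsMinOn f (Icc a b) a)
    (hf : DifferentiableAt ℝ f a) : 0 ≤ deriv f a := by
  have hlim : Tendsto (slope f a) (𝓝[>] a) (𝓝 (deriv f a)) :=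
    (hasDerivWithinAt_iff_tendsto_slope' self_notMem_Ioi).1 hf.hasDerivAt.hasDerivWithinAt
  refine ge_of_tendsto hlim (eventually_of_mem (Ioo_mem_nhdsGT hab) fun x hx => ?_)
  rw [slope_def_field]
  exact div_nonneg (sub_nonneg.2 (hmin ⟨hx.1.le, hx.2.le⟩)) (sub_nonneg.2 hx.1.le)

theorem deriv_nonpos_of_isMinOn_Icc_right (hab : a < b) (hmin : IsMinOn f (Icc a b) b)
    (hf : DifferentiableAt ℝ f b) : deriv f b ≤ 0 := by
  have hlim : Tendsto (slope f b) (𝓝[<] b) (𝓝 (deriv f b)) :=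
    (hasDerivWithinAt_iff_tendsto_slope' self_notMem_Iio).1 hf.hasDerivAt.hasDerivWithinAt
  refine le_of_tendsto hlim (eventually_of_mem (Ioo_mem_nhdsLT hab) fun x hx => ?_)
  rw [slope_def_field]
  exact div_nonpos_of_nonneg_of_nonpos (sub_nonneg.2 (hmin ⟨hx.1.le, hx.2.le⟩))
    (sub_nonpos.2 hx.2.le)

theorem exists_deriv_eq_zero_of_deriv_neg_left (hab : a < b)
    (hf : ∀ x ∈ Icc a b, DifferentiableAt ℝ f x) (ha : deriv f a < 0)
    (hb : f a ≤ f b ∨ 0 ≤ deriv f b) :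
    ∃ c ∈ Icc a b, f c ≤ f a ∧ deriv f c = 0 := by
  have ha_not_min : ¬IsMinOn f (Icc a b) a := fun hmin =>
    ha.not_ge (deriv_nonneg_of_isMinOn_Icc_left hab hmin (hf a ⟨le_rfl, hab.le⟩))
  obtain ⟨c, hc, hmin⟩ := isCompact_Icc.exists_isMinOn (nonempty_Icc.2 hab.le)
    fun x hx => (hf x hx).continuousAt.continuousWithinAt
  refine ⟨c, hc, hmin ⟨le_rfl, hab.le⟩, ?_⟩
  rcases hc.2.eq_or_lt with rfl | hcb
  · have hb' : 0 ≤ deriv f c :=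
      hb.resolve_left fun hac => ha_not_min fun x hx => hac.trans (hmin hx)
    exact (deriv_nonpos_of_isMinOn_Icc_right hab hmin (hf c hc)).antisymm hb'
  · have hac : a < c := hc.1.lt_of_ne fun hac => ha_not_min (hac ▸ hmin)
    exact (hmin.isLocalMin (Icc_mem_nhds hac hcb)).deriv_eq_zero

end

theorem stmt_4_general (φ : ℝ → ℝ) (hφ : ContDiff ℝ 1 φ)
    (μ : ℝ)
    (ψ : ℝ → ℝ) (hψ : ψ = fun α => φ α - (φ 0 + μ * deriv φ 0 * α))
    (αl αu : ℝ) (hlt : αl < αu)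
    (h2 : deriv ψ αl < 0)
    (h3 : ψ αl ≤ ψ αu ∨ 0 ≤ deriv ψ αu) :
    ∃ αs ∈ Set.Icc αl αu, ψ αs ≤ ψ αl ∧ deriv ψ αs = 0 := by
  have hψd : Differentiable ℝ ψ := hψ ▸ (hφ.differentiable one_ne_zero).sub (by fun_prop)
  exact exists_deriv_eq_zero_of_deriv_neg_left hlt (fun x _ => hψd x) h2 h3

theorem stmt_4 (φ : ℝ → ℝ) (hφ : ContDiff ℝ 1 φ)
    (μ : ℝ) (hμ0 : 0 < μ) (hμ1 : μ < 1)
    (ψ : ℝ → ℝ) (hψ : ψ = fun α => φ α - (φ 0 + μ * deriv φ 0 * α))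
    (αl αu : ℝ) (hlt : αl < αu)
    (h1 : ψ αl ≤ 0) (h2 : deriv ψ αl < 0)
    (h3 : ψ αl ≤ ψ αu ∨ 0 ≤ deriv ψ αu) :
    ∃ αs ∈ Set.Icc αl αu, ψ αs ≤ ψ αl ∧ deriv ψ αs = 0 :=
  stmt_4_general φ hφ μ ψ hψ αl αu hlt h2 h3
end

section
/- The Matérn-5/2 kernel k(p,q) = (1 + √5|p−q|/l + 5|p−q|²/(3l²))·e^{−√5|p−q|/l} on ℝ, with l > 0, is twice continuously differentiable as a function of (p,q), with mixed second derivative ∂²k/∂p∂q (p,q) = (5/(3l²))·(1 + √5|p−q|/l − 5|p−q|²/l²)·e^{−√5|p−q|/l}. -/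
/-!
Write `k p q = ρ |p - q|` with the radial profile `ρ t = (1 + a t + a² t² / 3) e^{-a t}`,
`a = √5 / l`. The profile satisfies `ρ' t = t φ t` and `φ' t = t χ t` with `φ`, `χ` smooth,
and whenever `ρ' t = t ψ t` the even extension `y ↦ ρ |y|` is differentiable with derivative
`y ψ |y|`: the factor `t` kills the kink of `|·|` at the origin. Applied twice this makes
`y ↦ ρ |y|` a `C²` function with second derivative `φ |y| + y² χ |y|`, and the mixed partial of
`k` is minus that second derivative at `p - q`.
-/

open Real Set

lemma hasDerivAt_comp_abs {ρ ψ : ℝ → ℝ} (h : ∀ t, HasDerivAt ρ (t * ψ t) t) (x : ℝ) :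
    HasDerivAt (fun y => ρ |y|) (x * ψ |x|) x := by
  have hneg : ∀ y, HasDerivAt (fun y => ρ (-y)) (y * ψ (-y)) y := fun y =>
    ((h (-y)).comp y (hasDerivAt_neg y)).congr_deriv (by ring)
  rcases lt_trichotomy x 0 with hx | rfl | hx
  · rw [abs_of_neg hx]
    refine (hneg x).congr_of_eventuallyEq ?_
    filter_upwards [eventually_lt_nhds hx] with y hy
    rw [abs_of_neg hy]
  · have hleft : HasDerivWithinAt (fun y => ρ |y|) 0 (Iic 0) 0 := by
      simpa using (hneg 0).hasDerivWithinAt.congr (fun y hy => by rw [abs_of_nonpos hy]) (by simp)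
    have hright : HasDerivWithinAt (fun y => ρ |y|) 0 (Ici 0) 0 := by
      simpa using (h 0).hasDerivWithinAt.congr (fun y hy => by rw [abs_of_nonneg hy]) (by simp)
    simpa [Iic_union_Ici] using hleft.union hright
  · rw [abs_of_pos hx]
    refine (h x).congr_of_eventuallyEq ?_
    filter_upwards [eventually_gt_nhds hx] with y hy
    rw [abs_of_pos hy]

lemma hasDerivAt_mul_comp_abs {φ χ : ℝ → ℝ} (h : ∀ t, HasDerivAt φ (t * χ t) t) (x : ℝ) :
    HasDerivAt (fun y => y * φ |y|) (φ |x| + x * (x * χ |x|)) x :=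
  ((hasDerivAt_id' x).mul (hasDerivAt_comp_abs h x)).congr_deriv (by ring)

lemma contDiff_two_comp_abs {ρ φ χ : ℝ → ℝ} (hρ : ∀ t, HasDerivAt ρ (t * φ t) t)
    (hφ : ∀ t, HasDerivAt φ (t * χ t) t) (hχ : Continuous χ) :
    ContDiff ℝ 2 (fun y => ρ |y|) := by
  have hφc : Continuous φ := continuous_iff_continuousAt.2 fun t => (hφ t).continuousAt
  rw [show (2 : WithTop ℕ∞) = 1 + 1 from rfl, contDiff_succ_iff_deriv]
  refine ⟨fun x => (hasDerivAt_comp_abs hρ x).differentiableAt, by simp, ?_⟩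
  rw [funext fun x => (hasDerivAt_comp_abs hρ x).deriv, contDiff_one_iff_deriv]
  refine ⟨fun x => (hasDerivAt_mul_comp_abs hφ x).differentiableAt, ?_⟩
  rw [funext fun x => (hasDerivAt_mul_comp_abs hφ x).deriv]
  fun_prop

noncomputable def maternProfile (a t : ℝ) : ℝ :=
  (1 + a * t + a ^ 2 / 3 * t ^ 2) * exp (-(a * t))

-- The functions `φ` and `χ` of the header, for `ρ = maternProfile a`.
noncomputable def maternSlope (a t : ℝ) : ℝ :=
  -(a ^ 2 / 3) * (1 + a * t) * exp (-(a * t))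

noncomputable def maternCurvature (a t : ℝ) : ℝ :=
  a ^ 4 / 3 * exp (-(a * t))

lemma hasDerivAt_exp_neg_mul (a t : ℝ) :
    HasDerivAt (fun t => exp (-(a * t))) (-a * exp (-(a * t))) t := by
  simpa [mul_comm] using ((hasDerivAt_id t).const_mul a).neg.exp

lemma hasDerivAt_maternProfile (a t : ℝ) :
    HasDerivAt (maternProfile a) (t * maternSlope a t) t := by
  have hpoly : HasDerivAt (fun t => 1 + a * t + a ^ 2 / 3 * t ^ 2) (a + a ^ 2 / 3 * (2 * t)) t := by
    refine ((((hasDerivAt_id' t).const_mul a).const_add 1).add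
      ((hasDerivAt_pow 2 t).const_mul (a ^ 2 / 3))).congr_deriv ?_
    push_cast; ring
  refine (hpoly.mul (hasDerivAt_exp_neg_mul a t)).congr_deriv ?_
  simp only [maternSlope]; ring

lemma hasDerivAt_maternSlope (a t : ℝ) :
    HasDerivAt (maternSlope a) (t * maternCurvature a t) t := by
  have hlin : HasDerivAt (fun t => -(a ^ 2 / 3) * (1 + a * t)) (-(a ^ 2 / 3) * a) t := by
    simpa using (((hasDerivAt_id t).const_mul a).const_add 1).const_mul (-(a ^ 2 / 3))
  refine (hlin.mul (hasDerivAt_exp_neg_mul a t)).congr_deriv ?_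
  simp only [maternCurvature]; ring

lemma continuous_maternCurvature (a : ℝ) : Continuous (maternCurvature a) := by
  unfold maternCurvature; fun_prop

theorem stmt_11_general (l : ℝ)
    (k : ℝ → ℝ → ℝ)
    (hk : k = fun p q =>
      (1 + Real.sqrt 5 * |p - q| / l + 5 * |p - q| ^ 2 / (3 * l ^ 2)) *
        Real.exp (-(Real.sqrt 5 * |p - q| / l))) :
    ContDiff ℝ 2 (fun pq : ℝ × ℝ => k pq.1 pq.2) ∧
      ∀ p q : ℝ,
        deriv (fun q' => deriv (fun p' => k p' q') p) q =
          5 / (3 * l ^ 2) *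
            (1 + Real.sqrt 5 * |p - q| / l - 5 * |p - q| ^ 2 / l ^ 2) *
            Real.exp (-(Real.sqrt 5 * |p - q| / l)) := by
  have ha : (√5 / l) ^ 2 = 5 / l ^ 2 := by rw [div_pow, sq_sqrt (by norm_num)]
  have harg (x : ℝ) : √5 * |x| / l = √5 / l * |x| := by ring
  generalize √5 / l = a at ha harg
  have hk' : k = fun p q => maternProfile a |p - q| := by
    rw [hk]; ext p q
    rw [maternProfile, harg, sq_abs, ha]; ring
  subst hk'
  refine ⟨(contDiff_two_comp_abs (hasDerivAt_maternProfile a) (hasDerivAt_maternSlope a)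
    (continuous_maternCurvature a)).comp (contDiff_fst.sub contDiff_snd), fun p q => ?_⟩
  have hinner : (fun q' => deriv (fun p' => maternProfile a |p' - q'|) p)
      = fun q' => (p - q') * maternSlope a |p - q'| := funext fun q' =>
    ((hasDerivAt_comp_abs (hasDerivAt_maternProfile a) (p - q')).comp_sub_const p q').deriv
  have hmixed := (hasDerivAt_mul_comp_abs (hasDerivAt_maternSlope a) (p - q)).comp_const_sub p q
  rw [hinner, hmixed.deriv, harg, sq_abs, maternSlope, maternCurvature]
  linear_combination
    exp (-(a * |p - q|)) * ((1 + a * |p - q|) - (a ^ 2 + 5 / l ^ 2) * (p - q) ^ 2) / 3 * ha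

theorem stmt_11 (l : ℝ) (hl : 0 < l)
    (k : ℝ → ℝ → ℝ)
    (hk : k = fun p q =>
      (1 + Real.sqrt 5 * |p - q| / l + 5 * |p - q| ^ 2 / (3 * l ^ 2)) *
        Real.exp (-(Real.sqrt 5 * |p - q| / l))) :
    ContDiff ℝ 2 (fun pq : ℝ × ℝ => k pq.1 pq.2) ∧
      ∀ p q : ℝ,
        deriv (fun q' => deriv (fun p' => k p' q') p) q =
          5 / (3 * l ^ 2) *
            (1 + Real.sqrt 5 * |p - q| / l - 5 * |p - q| ^ 2 / l ^ 2) *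
            Real.exp (-(Real.sqrt 5 * |p - q| / l)) :=
  stmt_11_general l k hk
end

section
/- Let φ be continuously differentiable and bounded below, with φ'(0) < 0, and 0 < μ < η < 1. Then there exists α⋆ > 0 satisfying the strong Wolfe conditions: φ(α⋆) ≤ φ(0) + μ·φ'(0)·α⋆ and |φ'(α⋆)| ≤ η·|φ'(0)|. -/
/-!
Let `g α = φ α - μ φ'(0) α`. Since `μ < 1`, `g'(0) = (1 - μ) φ'(0) < 0`, so `g` dips below `g 0`
just right of `0`; since `φ` is bounded below and `μ φ'(0) < 0`, `g` eventually exceeds `g 0`.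
Hence on a suitable `[0, b]` the minimum of `g` is attained at an interior point `c`, where
`φ'(c) = μ φ'(0)` and `φ(c) < φ(0) + μ φ'(0) c`; as `μ ≤ η` both Wolfe conditions hold at `c`.
-/

open Filter Set Topology

theorem HasDerivAt.eventually_lt_of_neg {f : ℝ → ℝ} {f' x : ℝ} (hf : HasDerivAt f f' x)
    (hf' : f' < 0) : ∀ᶠ y in 𝓝[>] x, f y < f x := by
  have hslope : ∀ᶠ y in 𝓝[>] x, slope f x y < 0 :=
    ((hasDerivAt_iff_tendsto_slope.mp hf).mono_left (nhdsGT_le_nhdsNE x)).eventually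
      (eventually_lt_nhds hf')
  filter_upwards [hslope, self_mem_nhdsWithin] with y hy hxy
  exact (slope_neg_iff_of_le (le_of_lt hxy)).mp hy

theorem exists_mem_Ioo_lt_deriv_eq_zero {g : ℝ → ℝ} {g' a b : ℝ} (hab : a < b)
    (hcont : ContinuousOn g (Icc a b)) (hga : HasDerivAt g g' a) (hg' : g' < 0)
    (hgb : g a < g b) : ∃ c ∈ Ioo a b, g c < g a ∧ deriv g c = 0 := by
  obtain ⟨x, hgx, hx⟩ := ((hga.eventually_lt_of_neg hg').and (Ioo_mem_nhdsGT hab)).exists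
  obtain ⟨c, hc, hmin⟩ := isCompact_Icc.exists_isMinOn (nonempty_Icc.2 hab.le) hcont
  have hgc : g c < g a := (hmin (Ioo_subset_Icc_self hx)).trans_lt hgx
  have hca : c ≠ a := by rintro rfl; exact lt_irrefl _ hgc
  have hcb : c ≠ b := by rintro rfl; exact lt_asymm hgc hgb
  have hc' : c ∈ Ioo a b := ⟨hc.1.lt_of_ne' hca, hc.2.lt_of_ne hcb⟩
  exact ⟨c, hc', hgc, (hmin.isLocalMin (Icc_mem_nhds hc'.1 hc'.2)).deriv_eq_zero⟩

theorem tendsto_add_mul_atTop_of_bddBelow {φ : ℝ → ℝ} (hbdd : ∃ m : ℝ, ∀ α : ℝ, 0 < α → m ≤ φ α)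
    {s : ℝ} (hs : 0 < s) : Tendsto (fun α => φ α + s * α) atTop atTop := by
  obtain ⟨m, hm⟩ := hbdd
  refine tendsto_atTop_mono' atTop ?_
    (tendsto_atTop_add_const_left atTop m (tendsto_id.const_mul_atTop hs))
  filter_upwards [eventually_gt_atTop 0] with α hα
  simpa using hm α hα

theorem stmt_15 (φ : ℝ → ℝ) (hφ : ContDiff ℝ 1 φ)
    (hbdd : ∃ m : ℝ, ∀ α : ℝ, 0 < α → m ≤ φ α)
    (hd : deriv φ 0 < 0)
    (μ η : ℝ) (hμ0 : 0 < μ) (hμη : μ < η) (hη1 : η < 1) :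
    ∃ αs : ℝ, 0 < αs ∧
      φ αs ≤ φ 0 + μ * deriv φ 0 * αs ∧
      |deriv φ αs| ≤ η * |deriv φ 0| := by
  set d₀ := deriv φ 0
  set g : ℝ → ℝ := fun α => φ α + -(μ * d₀) * α
  have hφd : Differentiable ℝ φ := hφ.differentiable one_ne_zero
  have hg : ∀ α, HasDerivAt g (deriv φ α - μ * d₀) α := fun α =>
    ((hφd α).hasDerivAt.add ((hasDerivAt_id' α).const_mul (-(μ * d₀)))).congr_deriv (by ring)
  have hslope : 0 < -(μ * d₀) := neg_pos.2 (mul_neg_of_pos_of_neg hμ0 hd)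
  obtain ⟨b, hb0, hgb⟩ := ((eventually_gt_atTop 0).and
    ((tendsto_add_mul_atTop_of_bddBelow hbdd hslope).eventually_gt_atTop (g 0))).exists
  have hg'0 : deriv φ 0 - μ * d₀ < 0 := by nlinarith
  obtain ⟨c, hc, hgc, hdgc⟩ := exists_mem_Ioo_lt_deriv_eq_zero hb0
    (fun α _ => (hg α).continuousAt.continuousWithinAt) (hg 0) hg'0 hgb
  have hdc : deriv φ c = μ * d₀ := by linarith [(hg c).deriv]
  refine ⟨c, hc.1, by simp only [g] at hgc; linarith, ?_⟩
  rw [hdc, abs_mul, abs_of_pos hμ0]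
  exact mul_le_mul_of_nonneg_right hμη.le (abs_nonneg _)
end

section
/- Let ψ: ℝ → ℝ be continuously differentiable with ψ(αₗ) ≤ 0 and ψ'(αₗ)·(αᵤ − αₗ) < 0 and ψ(αₗ) ≤ ψ(αᵤ), where αₗ ≠ αᵤ. Then the minimum of ψ over the closed interval with endpoints αₗ, αᵤ is attained at an interior point α⋆, and at that point ψ'(α⋆) = 0 and ψ(α⋆) ≤ ψ(αₗ) ≤ 0. -/
/-!
By compactness `ψ` attains its minimum on `[αₗ, αᵤ]`. The sign condition on `ψ'(αₗ)` makes `ψ`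
decrease when moving from `αₗ` into the interval, so this minimum is strictly below `ψ(αₗ)`,
hence below `ψ(αᵤ)` too: it lies in the open interval, where Fermat's theorem applies.
-/

open Set

namespace Set

theorem mem_uIoo_of_mem_uIcc_of_ne {α : Type*} [LinearOrder α] {x a b : α} (hx : x ∈ uIcc a b) (ha : x ≠ a) (hb : x ≠ b) :
    x ∈ uIoo a b := by
  rcases le_total a b with hab | hba
  · rw [uIcc_of_le hab] at hx
    rw [uIoo_of_le hab]
    exact ⟨hx.1.lt_of_ne' ha, hx.2.lt_of_ne hb⟩
  · rw [uIcc_of_ge hba] at hx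
    rw [uIoo_of_ge hba]
    exact ⟨hx.1.lt_of_ne' hb, hx.2.lt_of_ne ha⟩

end Set

theorem not_isLocalMinOn_uIcc_of_deriv_mul_sub_neg {f : ℝ → ℝ} {a b : ℝ}
    (hf : DifferentiableAt ℝ f a) (h : deriv f a * (b - a) < 0) :
    ¬ IsLocalMinOn f (uIcc a b) a := by
  intro hmin
  have hdir : b - a ∈ posTangentConeAt (uIcc a b) a :=
    sub_mem_posTangentConeAt_of_segment_subset (segment_eq_uIcc a b).subset
  have := hmin.hasFDerivWithinAt_nonneg hf.hasFDerivAt.hasFDerivWithinAt hdir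
  simp only [fderiv_eq_smul_deriv, smul_eq_mul] at this
  linarith

theorem exists_mem_uIoo_isMinOn_uIcc_lt {f : ℝ → ℝ} {a b : ℝ} (hfc : ContinuousOn f (uIcc a b))
    (hfa : DifferentiableAt ℝ f a) (h : deriv f a * (b - a) < 0) (hab : f a ≤ f b) :
    ∃ c ∈ uIoo a b, IsMinOn f (uIcc a b) c ∧ f c < f a := by
  obtain ⟨c, hc, hmin⟩ := isCompact_uIcc.exists_isMinOn nonempty_uIcc hfc
  have hlt : f c < f a := by
    by_contra! hle
    exact not_isLocalMinOn_uIcc_of_deriv_mul_sub_neg hfa h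
      (IsMinOn.localize fun x hx => hle.trans (hmin hx))
  refine ⟨c, mem_uIoo_of_mem_uIcc_of_ne hc ?_ ?_, hmin, hlt⟩
  · rintro rfl
    exact hlt.false
  · rintro rfl
    exact (hlt.trans_le hab).false

theorem stmt_16_general (ψ : ℝ → ℝ) (hψ : ContDiff ℝ 1 ψ)
    (αl αu : ℝ)
    (h1 : ψ αl ≤ 0) (h2 : deriv ψ αl * (αu - αl) < 0) (h3 : ψ αl ≤ ψ αu) :
    ∃ αs ∈ Set.Ioo (min αl αu) (max αl αu),
      (∀ x ∈ Set.uIcc αl αu, ψ αs ≤ ψ x) ∧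
      deriv ψ αs = 0 ∧ ψ αs ≤ ψ αl ∧ ψ αl ≤ 0 := by
  obtain ⟨αs, hs, hmin, hlt⟩ := exists_mem_uIoo_isMinOn_uIcc_lt hψ.continuous.continuousOn
    (hψ.differentiable one_ne_zero αl) h2 h3
  have hnhds : uIcc αl αu ∈ nhds αs :=
    Filter.mem_of_superset (isOpen_Ioo.mem_nhds hs) uIoo_subset_uIcc_self
  exact ⟨αs, hs, fun x hx => hmin hx, (hmin.isLocalMin hnhds).deriv_eq_zero, hlt.le, h1⟩

theorem stmt_16 (ψ : ℝ → ℝ) (hψ : ContDiff ℝ 1 ψ)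
    (αl αu : ℝ) (hne : αl ≠ αu)
    (h1 : ψ αl ≤ 0) (h2 : deriv ψ αl * (αu - αl) < 0) (h3 : ψ αl ≤ ψ αu) :
    ∃ αs ∈ Set.Ioo (min αl αu) (max αl αu),
      (∀ x ∈ Set.uIcc αl αu, ψ αs ≤ ψ x) ∧
      deriv ψ αs = 0 ∧ ψ αs ≤ ψ αl ∧ ψ αl ≤ 0 :=
  stmt_16_general ψ hψ αl αu h1 h2 h3
end

section
/- Let φ_min be a strict lower bound for the continuously differentiable function φ with φ'(0) < 0, let μ ∈ (0,1), c > 1, α_max > 0, and α₀ = min(1, α_max). Consider the iteration starting from [αₗ, αᵤ] = [0, α₀] that repeatedly replaces [αₗ, αᵤ] by [αᵤ, min(c·αᵤ, α_max)]. Then the number of updates until αᵤ = α_max or ψ(αᵤ) ≥ ψ(αₗ) or ψ'(αᵤ) ≥ 0 is at most ⌈(1/α₀)·log_c(min((1/μ)·(φ_min − φ(0))/φ'(0), α_max))⌉. -/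
/-!
As long as the stopping test fails, `ψ` strictly decreases along the upper endpoints, starting
from `ψ 0 = 0`, so `ψ (αᵤ) < 0`; together with `φ_min < φ` this forces `αᵤ < α_b`. Since the
endpoint is also below `α_max`, it has not been capped yet and equals `cᴺ`, which is impossible
once `N ≥ log_c (min α_b α_max)`.
-/

lemma lt_one_div_mul_div_of_lt_add_mul {μ d m y f₀ a : ℝ} (hμ : 0 < μ) (hd : d < 0)
    (hm : m < y) (hy : y < f₀ + μ * d * a) : a < 1 / μ * ((m - f₀) / d) := by
  have hμd : μ * d < 0 := mul_neg_of_pos_of_neg hμ hd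
  rw [one_div_mul_eq_div, div_div, mul_comm d μ, lt_div_iff_of_neg hμd]
  linarith

lemma eq_min_pow_mul_of_eq_min_mul {c a M : ℝ} {u : ℕ → ℝ} (hc : 1 ≤ c) (hM : 0 ≤ M)
    (hu0 : u 0 = min a M) (hu : ∀ k, u (k + 1) = min (c * u k) M) (k : ℕ) :
    u k = min (c ^ k * a) M := by
  induction k with
  | zero => simpa using hu0
  | succ k ih =>
    have hcM : min (c * M) M = M := min_eq_right (le_mul_of_one_le_left hM hc)
    rw [hu, ih, mul_min_of_nonneg _ _ (by linarith), min_assoc, hcM, pow_succ', mul_assoc]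

lemma apply_lt_apply_zero_of_forall_lt {g : ℝ → ℝ} {u lo : ℕ → ℝ}
    (hlo : ∀ k, lo (k + 1) = u k) {n : ℕ} (h : ∀ k ≤ n, g (u k) < g (lo k)) :
    g (u n) < g (lo 0) := by
  induction n with
  | zero => exact h 0 le_rfl
  | succ n ih =>
    calc g (u (n + 1)) < g (lo (n + 1)) := h (n + 1) le_rfl
      _ = g (u n) := by rw [hlo]
      _ < g (lo 0) := ih fun k hk => h k (hk.trans n.le_succ)

lemma lt_one_div_mul_logb_of_pow_lt {c α B : ℝ} {N : ℕ} (hc : 1 < c) (hα : 0 < α)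
    (hα1 : α ≤ 1) (h : c ^ N < B) : (N : ℝ) < 1 / α * Real.logb c B := by
  have hlog : (N : ℝ) < Real.logb c B := by
    simpa [Real.logb_pow, Real.logb_self_eq_one hc] using
      Real.logb_lt_logb hc (pow_pos (zero_lt_one.trans hc) N) h
  calc (N : ℝ) < Real.logb c B := hlog
    _ ≤ 1 / α * Real.logb c B :=
      le_mul_of_one_le_left ((Nat.cast_nonneg N).trans hlog.le) (one_le_one_div hα hα1)

theorem stmt_18_general (φ : ℝ → ℝ)
    (φmin : ℝ) (hbound : ∀ α : ℝ, φmin < φ α)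
    (hd : deriv φ 0 < 0)
    (μ : ℝ) (hμ0 : 0 < μ)
    (c αmax : ℝ) (hc : 1 < c) (hαmax : 0 < αmax)
    (α₀ : ℝ) (hα₀ : α₀ = min 1 αmax)
    (ψ : ℝ → ℝ) (hψ : ψ = fun α => φ α - (φ 0 + μ * deriv φ 0 * α))
    (u lo : ℕ → ℝ)
    (hu0 : u 0 = α₀) (hu : ∀ k, u (k + 1) = min (c * u k) αmax)
    (hlo0 : lo 0 = 0) (hlo : ∀ k, lo (k + 1) = u k)
    (N : ℕ)
    (hN : N = ⌈(1 / α₀) *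
      Real.logb c (min ((1 / μ) * ((φmin - φ 0) / deriv φ 0)) αmax)⌉₊) :
    ∃ k ≤ N, u k = αmax ∨ ψ (lo k) ≤ ψ (u k) ∨ 0 ≤ deriv ψ (u k) := by
  by_contra! hstop
  have hu_eq (k : ℕ) : u k = min (c ^ k) αmax := by
    simpa using eq_min_pow_mul_of_eq_min_mul hc.le hαmax.le (hu0.trans hα₀) hu k
  have hpow_max : c ^ N < αmax := by
    by_contra! h
    exact (hstop N le_rfl).1 (by rw [hu_eq, min_eq_right h])
  have hψ_neg : ψ (u N) < 0 := by
    simpa [hlo0, hψ] using apply_lt_apply_zero_of_forall_lt hlo fun k hk => (hstop k hk).2.1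
  have hpow_b : c ^ N < 1 / μ * ((φmin - φ 0) / deriv φ 0) := by
    rw [hu_eq, min_eq_left hpow_max.le, hψ, sub_neg] at hψ_neg
    exact lt_one_div_mul_div_of_lt_add_mul hμ0 hd (hbound _) hψ_neg
  have hN_lt := lt_one_div_mul_logb_of_pow_lt hc (hα₀ ▸ lt_min one_pos hαmax)
    (hα₀ ▸ min_le_left _ _) (lt_min hpow_b hpow_max)
  rw [hN] at hN_lt
  exact (Nat.le_ceil _).not_gt hN_lt

theorem stmt_18 (φ : ℝ → ℝ) (hφ : ContDiff ℝ 1 φ)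
    (φmin : ℝ) (hbound : ∀ α : ℝ, φmin < φ α)
    (hd : deriv φ 0 < 0)
    (μ : ℝ) (hμ0 : 0 < μ) (hμ1 : μ < 1)
    (c αmax : ℝ) (hc : 1 < c) (hαmax : 0 < αmax)
    (α₀ : ℝ) (hα₀ : α₀ = min 1 αmax)
    (ψ : ℝ → ℝ) (hψ : ψ = fun α => φ α - (φ 0 + μ * deriv φ 0 * α))
    (u lo : ℕ → ℝ)
    (hu0 : u 0 = α₀) (hu : ∀ k, u (k + 1) = min (c * u k) αmax)
    (hlo0 : lo 0 = 0) (hlo : ∀ k, lo (k + 1) = u k)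
    (N : ℕ)
    (hN : N = ⌈(1 / α₀) *
      Real.logb c (min ((1 / μ) * ((φmin - φ 0) / deriv φ 0)) αmax)⌉₊) :
    ∃ k ≤ N, u k = αmax ∨ ψ (lo k) ≤ ψ (u k) ∨ 0 ≤ deriv ψ (u k) :=
  stmt_18_general φ φmin hbound hd μ hμ0 c αmax hc hαmax α₀ hα₀ ψ hψ u lo hu0 hu hlo0 hlo N hN
end
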